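/- Let S : ℝⁿ → ℝⁿ be a nonexpansive operator with a fixed point w⋆. Define the halved (Krasnoselskii–Mann) iteration w^{k+1} = (1/2)w^k + (1/2)S(w^k) starting from any w¹ ∈ ℝⁿ. Then for every N ≥ 1, ‖(1/2)S(w^N) − (1/2)w^N‖² ≤ ((N−1)^{N−1}/N^N) · ‖w¹ − w⋆‖². -/
import Mathlib
set_option maxHeartbeats 1000000

open RealInnerProductSpace

variable {F : Type*} [NormedAddCommGroup F] [InnerProductSpace ℝ F]

noncomputable def psiQ (ν t : ℝ) (y u : F) : ℝ :=
  (2*ν - 4 + (ν - 4)*t) * ⟪u, u⟫ + (4*t - 2*ν + 4) * ⟪u, y⟫ + (ν - 1 - t) * ⟪y, y⟫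

lemma step_alg (ν t : ℝ) (y u v : F)
    (hA : 0 ≤ ⟪u - v, v⟫) (hB : 0 ≤ ⟪v, (y - u) - v⟫)
    (ht : 0 ≤ t) (htv : t ≤ ν - 3) (hν : 2 ≤ ν) :
    ν * psiQ ν (t+1) (y - u) v ≤ (ν - 1) * psiQ ν t y u := by
  have hz : (0:ℝ) ≤ ⟪y + (ν-2) • u - ν • v, y + (ν-2) • u - ν • v⟫ := real_inner_self_nonneg
  have key : (ν - 1) * psiQ ν t y u - ν * psiQ ν (t+1) (y - u) v
      = (2*ν*(ν-1)*(t+1)) * ⟪u - v, v⟫ + (2*ν*(ν-3-t)) * ⟪v, (y - u) - v⟫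
        + (t+1) * ⟪y + (ν-2) • u - ν • v, y + (ν-2) • u - ν • v⟫ := by
    simp only [psiQ, inner_sub_left, inner_sub_right, inner_add_left, inner_add_right,
      real_inner_smul_left, real_inner_smul_right, real_inner_comm y u, real_inner_comm y v,
      real_inner_comm u v]
    ring
  have h1 : 0 ≤ (2*ν*(ν-1)*(t+1)) * ⟪u - v, v⟫ := by
    apply mul_nonneg _ hA
    have : (0:ℝ) ≤ 2*ν := by linarith
    have : (0:ℝ) ≤ ν-1 := by linarith
    have : (0:ℝ) ≤ t+1 := by linarith
    positivity
  have h2 : 0 ≤ (2*ν*(ν-3-t)) * ⟪v, (y - u) - v⟫ := by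
    apply mul_nonneg _ hB
    have h : (0:ℝ) ≤ ν-3-t := by linarith
    nlinarith
  have h3 : 0 ≤ (t+1) * ⟪y + (ν-2) • u - ν • v, y + (ν-2) • u - ν • v⟫ := by
    apply mul_nonneg _ hz; linarith
  linarith

lemma last_alg (ν : ℝ) (y u v : F)
    (hA : 0 ≤ ⟪u - v, v⟫) (hB : 0 ≤ ⟪v, (y - u) - v⟫) (hν : 2 ≤ ν) :
    ν^2 * ⟪v, v⟫ ≤ psiQ ν (ν - 2) y u := by
  have hz : (0:ℝ) ≤ ⟪y + (ν-2) • u - ν • v, y + (ν-2) • u - ν • v⟫ := real_inner_self_nonneg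
  have key : psiQ ν (ν-2) y u - ν^2 * ⟪v, v⟫
      = (2*ν*(ν-1)) * ⟪u - v, v⟫ + (2*ν) * ⟪v, (y - u) - v⟫
        + ⟪y + (ν-2) • u - ν • v, y + (ν-2) • u - ν • v⟫ := by
    simp only [psiQ, inner_sub_left, inner_sub_right, inner_add_left, inner_add_right,
      real_inner_smul_left, real_inner_smul_right, real_inner_comm y u, real_inner_comm y v,
      real_inner_comm u v]
    ring
  nlinarith [mul_nonneg (by nlinarith : (0:ℝ) ≤ 2*ν*(ν-1)) hA,
    mul_nonneg (by nlinarith : (0:ℝ) ≤ 2*ν) hB, hz]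

lemma base_alg (ν : ℝ) (y u : F) (hB : 0 ≤ ⟪u, y - u⟫) (hν : 2 ≤ ν) :
    psiQ ν 0 y u ≤ (ν - 1) * ⟪y, y⟫ := by
  have key : (ν - 1) * ⟪y, y⟫ - psiQ ν 0 y u = (2*ν - 4) * ⟪u, y - u⟫ := by
    simp only [psiQ, inner_sub_right, real_inner_comm y u]
    ring
  nlinarith [mul_nonneg (by linarith : (0:ℝ) ≤ 2*ν - 4) hB]

/-- Sublinear rate for the halved (Krasnoselskii–Mann) iteration of a
nonexpansive operator. -/
theorem stmt0 {n : ℕ} (S : EuclideanSpace ℝ (Fin n) → EuclideanSpace ℝ (Fin n))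
    (hS : ∀ x y, ‖S x - S y‖ ≤ ‖x - y‖)
    (wstar : EuclideanSpace ℝ (Fin n)) (hfix : S wstar = wstar)
    (w : ℕ → EuclideanSpace ℝ (Fin n))
    (hiter : ∀ k, w (k + 1) = (1/2 : ℝ) • w k + (1/2 : ℝ) • S (w k))
    (N : ℕ) (hN : 1 ≤ N) :
    ‖(1/2 : ℝ) • S (w N) - (1/2 : ℝ) • w N‖ ^ 2 ≤
      (((N - 1 : ℕ) ^ (N - 1 : ℕ) : ℝ) / (N : ℝ) ^ N) * ‖w 1 - wstar‖ ^ 2 := by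
  set x : ℕ → EuclideanSpace ℝ (Fin n) := fun k => w (k+1) with hxdef
  set u : ℕ → EuclideanSpace ℝ (Fin n) := fun k => x k - x (k+1) with hudef
  set y : ℕ → EuclideanSpace ℝ (Fin n) := fun k => x k - wstar with hydef
  have h2u : ∀ k, x k - S (x k) = (2:ℝ) • u k := by
    intro k
    have h := hiter (k+1)
    simp only [hudef, hxdef]
    rw [h]
    module
  have h2x : ∀ k, x k + S (x k) = (2:ℝ) • x (k+1) := by
    intro k
    have h := hiter (k+1)
    simp only [hxdef]
    rw [h]
    module
  have hyu : ∀ k, y (k+1) = y k - u k := by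
    intro k; simp only [hydef, hudef]; abel
  have firm : ∀ p q : EuclideanSpace ℝ (Fin n),
      0 ≤ ⟪(p - S p) - (q - S q), (p + S p) - (q + S q)⟫ := by
    intro p q
    have h : ‖S p - S q‖^2 ≤ ‖p - q‖^2 := pow_le_pow_left₀ (norm_nonneg _) (hS p q) 2
    have e1 : (p - S p) - (q - S q) = (p - q) - (S p - S q) := by abel
    have e2 : (p + S p) - (q + S q) = (p - q) + (S p - S q) := by abel
    rw [e1, e2, inner_sub_left, inner_add_right, inner_add_right,
      real_inner_self_eq_norm_sq, real_inner_self_eq_norm_sq,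
      real_inner_comm (S p - S q) (p - q)]
    linarith
  have hA : ∀ k, 0 ≤ ⟪u k - u (k+1), u (k+1)⟫ := by
    intro k
    have h := firm (x k) (x (k+1))
    rw [h2u k, h2u (k+1), h2x k, h2x (k+1)] at h
    have e1 : (2:ℝ) • u k - (2:ℝ) • u (k+1) = (2:ℝ) • (u k - u (k+1)) := by module
    have e2 : (2:ℝ) • x (k+1) - (2:ℝ) • x (k+2) = (2:ℝ) • u (k+1) := by
      simp only [hudef]; module
    rw [e1, e2, real_inner_smul_left, real_inner_smul_right] at h
    linarith
  have hB : ∀ k, 0 ≤ ⟪u k, y k - u k⟫ := by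
    intro k
    have h := firm (x k) wstar
    rw [hfix, sub_self, sub_zero, h2u k, h2x k] at h
    have e2 : (2:ℝ) • x (k+1) - (wstar + wstar) = (2:ℝ) • (y k - u k) := by
      simp only [hydef, hudef]; module
    rw [e2, real_inner_smul_left, real_inner_smul_right] at h
    linarith
  have hN1 : N - 1 + 1 = N := Nat.succ_pred_eq_of_pos hN
  have hvec : (1/2 : ℝ) • S (w N) - (1/2 : ℝ) • w N = -(u (N-1)) := by
    have hx1 : x (N-1) = w N := by
      show w (N - 1 + 1) = w N
      rw [hN1]
    have hx2 : x N = w (N+1) := rfl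
    have h := hiter N
    simp only [hudef, hN1, hx1, hx2, h]
    module
  have hy0 : y 0 = w 1 - wstar := rfl
  rw [hvec, norm_neg]
  rcases Nat.lt_or_ge N 2 with hNlt | hN2
  · have hN' : N = 1 := by omega
    subst hN'
    have h := hB 0
    rw [inner_sub_right, real_inner_self_eq_norm_sq] at h
    have hc : ⟪u 0, y 0⟫ ≤ ‖u 0‖ * ‖y 0‖ := real_inner_le_norm _ _
    rw [← hy0]
    have h1 := norm_nonneg (u 0)
    have h2 := norm_nonneg (y 0)
    norm_num
    nlinarith
  · obtain ⟨M, rfl⟩ : ∃ M, N = M + 2 := ⟨N - 2, by omega⟩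
    set ν : ℝ := ((M:ℝ) + 2) with hνdef
    have hν2 : 2 ≤ ν := by
      rw [hνdef]; linarith [Nat.cast_nonneg (α := ℝ) M]
    have hνpos : (0:ℝ) < ν := by linarith
    set Ψ : ℕ → ℝ := fun k => psiQ ν (k:ℝ) (y k) (u k) with hΨ
    set ρ : ℝ := (ν-1)/ν with hρ
    have hρnn : (0:ℝ) ≤ ρ := by
      rw [hρ]; apply div_nonneg <;> linarith
    have hstep : ∀ k:ℕ, (k:ℝ) ≤ ν - 3 → Ψ (k+1) ≤ ρ * Ψ k := by
      intro k hk
      have hb := hB (k+1)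
      rw [hyu k] at hb
      have h := step_alg ν (k:ℝ) (y k) (u k) (u (k+1)) (hA k) hb (Nat.cast_nonneg k) hk hν2
      have hΨ1 : Ψ (k+1) = psiQ ν ((k:ℝ)+1) (y k - u k) (u (k+1)) := by
        rw [hΨ]; simp only [hyu k]; push_cast; ring_nf
      rw [hΨ1, hρ, div_mul_eq_mul_div, le_div_iff₀ hνpos]
      calc psiQ ν ((k:ℝ)+1) (y k - u k) (u (k+1)) * ν
          = ν * psiQ ν ((k:ℝ)+1) (y k - u k) (u (k+1)) := by ring
        _ ≤ (ν - 1) * psiQ ν (k:ℝ) (y k) (u k) := h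
        _ = (ν - 1) * Ψ k := by rw [hΨ]
    have hiterate : ∀ j, j ≤ M → Ψ j ≤ ρ^j * Ψ 0 := by
      intro j
      induction j with
      | zero => intro _; simp
      | succ j ih =>
        intro hj
        have hj' : j ≤ M := by omega
        have hjr : (j:ℝ) ≤ ν - 3 := by
          rw [hνdef]
          have : (j:ℝ) ≤ (M:ℝ) - 1 := by
            have : j + 1 ≤ M := hj
            have := Nat.cast_le (α := ℝ).mpr this
            push_cast at this ⊢
            linarith
          linarith
        calc Ψ (j+1) ≤ ρ * Ψ j := hstep j hjr
          _ ≤ ρ * (ρ^j * Ψ 0) := mul_le_mul_of_nonneg_left (ih hj') hρnn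
          _ = ρ^(j+1) * Ψ 0 := by ring
    -- last step
    have hbM := hB (M+1)
    rw [hyu M] at hbM
    have hlast := last_alg ν (y M) (u M) (u (M+1)) (hA M) hbM hν2
    have hν2M : ν - 2 = (M:ℝ) := by rw [hνdef]; ring
    rw [hν2M] at hlast
    have hbase := base_alg ν (y 0) (u 0) (hB 0) hν2
    have hbase' : Ψ 0 ≤ (ν - 1) * ⟪y 0, y 0⟫ := by
      rw [hΨ]; simpa using hbase
    have hchain : ν^2 * ⟪u (M+1), u (M+1)⟫ ≤ ρ^M * ((ν - 1) * ⟪y 0, y 0⟫) := by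
      calc ν^2 * ⟪u (M+1), u (M+1)⟫ ≤ Ψ M := hlast
        _ ≤ ρ^M * Ψ 0 := hiterate M le_rfl
        _ ≤ ρ^M * ((ν - 1) * ⟪y 0, y 0⟫) :=
            mul_le_mul_of_nonneg_left hbase' (pow_nonneg hρnn M)
    -- finish
    have hNsub : M + 2 - 1 = M + 1 := rfl
    rw [hNsub]
    rw [real_inner_self_eq_norm_sq, real_inner_self_eq_norm_sq, hy0] at hchain
    have hν2pos : (0:ℝ) < ν^2 := by positivity
    have hfin : ‖u (M+1)‖^2 ≤ (ρ^M * (ν - 1) / ν^2) * ‖w 1 - wstar‖^2 := by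
      rw [div_mul_eq_mul_div, le_div_iff₀ hν2pos]
      have e : ‖u (M+1)‖^2 * ν^2 = ν^2 * ‖u (M+1)‖^2 := by ring
      rw [e]
      calc ν^2 * ‖u (M+1)‖^2 ≤ ρ^M * ((ν - 1) * ‖w 1 - wstar‖^2) := hchain
        _ = ρ^M * (ν - 1) * ‖w 1 - wstar‖^2 := by ring
    have hconst : ρ^M * (ν - 1) / ν^2 = (((M + 1 : ℕ) ^ (M + 1 : ℕ) : ℝ) / ((M + 2 : ℕ) : ℝ) ^ (M + 2)) := by
      rw [hρ, hνdef]
      have h1 : ((M:ℝ)+2) ≠ 0 := by positivity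
      push_cast
      rw [div_pow]
      field_simp
      ring
    rw [hconst] at hfin
    convert hfin using 3 <;> push_cast <;> ring
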